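/- arXiv:2108.07644 — 6 statements merged into one kernel-verified Lean document; each statement's English description precedes it below -/
import Mathlib

section
/- Consider the single-sample WFLMC power-allocation program. If the learning rate satisfies η ≤ (K_a²/(ℓ²K²)) · min{ R/S , min_{k∈𝒦} 2 P h_k² / N₀ } (the LMC-limited regime), then the constant allocation a*_s = η N₀ K²/(2 K_a²) for every s = 1,…,S is feasible for the program, achieves objective value Φ(a*) = 0, and is optimal, i.e. Φ(a*) ≤ Φ(a) for every feasible point a. (Equivalently, the optimal power gain is α^{[s]}_opt = (K/K_a)·√(η N₀/2) for all s.) -/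
open Finset

/-- Objective Φ of the single-sample WFLMC power-allocation program,
in the variables `a s = (α^{[s]})²`, `s = 1, …, S` (indexed here by `Fin S`). -/
noncomputable def wflmcObj (S : ℕ) (η N₀ K Ka γ : ℝ) (a : Fin S → ℝ) : ℝ :=
  ∑ s : Fin S, ((1 + γ) / 2) ^ (-(2 * ((s : ℕ) + 1) : ℤ)) *
    max 0 (η ^ 2 * N₀ * K ^ 2 / (a s * Ka ^ 2) - 2 * η)

/-- Feasibility for the single-sample WFLMC power-allocation program:
positivity, per-device power constraints, the LMC-noise cap, and the
differential-privacy constraint. -/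
def wflmcFeasible {ι : Type*} (S : ℕ) (η N₀ ℓ P K Ka R : ℝ)
    (𝒦 : Finset ι) (h : ι → ℝ) (a : Fin S → ℝ) : Prop :=
  (∀ s, 0 < a s) ∧
  (∀ s, ∀ k ∈ 𝒦, a s ≤ P * (h k) ^ 2 / ℓ ^ 2) ∧
  (∀ s, a s ≤ η * N₀ * K ^ 2 / (2 * Ka ^ 2)) ∧
  (∑ s : Fin S, 2 * ℓ ^ 2 * a s / N₀ ≤ R)

/-- LMC-limited regime: if `η ≤ (K_a²/(ℓ²K²)) · min{R/S, min_k 2P h_k²/N₀}`, then the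
constant allocation `a*_s = η N₀ K²/(2 K_a²)` is feasible, achieves objective value `0`,
and is optimal. -/
theorem wflmc_lmc_limited_regime {ι : Type*} (S : ℕ) (hS : 1 ≤ S)
    (η N₀ ℓ P K Ka R γ : ℝ)
    (hη : 0 < η) (hN₀ : 0 < N₀) (hℓ : 0 < ℓ) (hP : 0 < P)
    (hK : 1 ≤ K) (hKa : 1 ≤ Ka) (hKaK : Ka ≤ K)
    (𝒦 : Finset ι) (h𝒦 : 𝒦.Nonempty) (h : ι → ℝ) (hh : ∀ k ∈ 𝒦, 0 < h k)
    (hR : 0 ≤ R) (hγ0 : 0 < γ) (hγ1 : γ < 1)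
    (hreg : η ≤ Ka ^ 2 / (ℓ ^ 2 * K ^ 2) *
      min (R / S) (𝒦.inf' h𝒦 fun k => 2 * P * (h k) ^ 2 / N₀)) :
    wflmcFeasible S η N₀ ℓ P K Ka R 𝒦 h (fun _ => η * N₀ * K ^ 2 / (2 * Ka ^ 2)) ∧
    wflmcObj S η N₀ K Ka γ (fun _ => η * N₀ * K ^ 2 / (2 * Ka ^ 2)) = 0 ∧
    ∀ a : Fin S → ℝ, wflmcFeasible S η N₀ ℓ P K Ka R 𝒦 h a →
      wflmcObj S η N₀ K Ka γ (fun _ => η * N₀ * K ^ 2 / (2 * Ka ^ 2)) ≤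
        wflmcObj S η N₀ K Ka γ a := by
  have hK0 : (0:ℝ) < K := lt_of_lt_of_le one_pos hK
  have hKa0 : (0:ℝ) < Ka := lt_of_lt_of_le one_pos hKa
  have hS0 : (0:ℝ) < (S:ℝ) := by exact_mod_cast hS
  have hastar : (0:ℝ) < η * N₀ * K ^ 2 / (2 * Ka ^ 2) := by positivity
  have hcoef : 0 < Ka ^ 2 / (ℓ ^ 2 * K ^ 2) := by positivity
  -- obj at a* is zero
  have hzero : wflmcObj S η N₀ K Ka γ (fun _ => η * N₀ * K ^ 2 / (2 * Ka ^ 2)) = 0 := by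
    unfold wflmcObj
    apply Finset.sum_eq_zero
    intro s _
    have : η ^ 2 * N₀ * K ^ 2 / (η * N₀ * K ^ 2 / (2 * Ka ^ 2) * Ka ^ 2) - 2 * η = 0 := by
      field_simp
      ring
    rw [this]
    simp
  refine ⟨?_, hzero, ?_⟩
  · refine ⟨fun _ => hastar, ?_, fun s => le_refl _, ?_⟩
    · intro s k hk
      have h1 : (𝒦.inf' h𝒦 fun k => 2 * P * (h k) ^ 2 / N₀) ≤ 2 * P * (h k) ^ 2 / N₀ :=
        Finset.inf'_le _ hk
      have h2 : η ≤ Ka ^ 2 / (ℓ ^ 2 * K ^ 2) * (2 * P * (h k) ^ 2 / N₀) :=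
        hreg.trans (by
          apply mul_le_mul_of_nonneg_left _ hcoef.le
          exact (min_le_right _ _).trans h1)
      have := mul_le_mul_of_nonneg_left h2 (le_of_lt (by positivity :
        (0:ℝ) < N₀ * K ^ 2 / (2 * Ka ^ 2)))
      calc η * N₀ * K ^ 2 / (2 * Ka ^ 2)
          = N₀ * K ^ 2 / (2 * Ka ^ 2) * η := by ring
        _ ≤ N₀ * K ^ 2 / (2 * Ka ^ 2) * (Ka ^ 2 / (ℓ ^ 2 * K ^ 2) * (2 * P * (h k) ^ 2 / N₀)) := this
        _ = P * (h k) ^ 2 / ℓ ^ 2 := by field_simp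
    · have h2 : η ≤ Ka ^ 2 / (ℓ ^ 2 * K ^ 2) * (R / S) :=
        hreg.trans (mul_le_mul_of_nonneg_left (min_le_left _ _) hcoef.le)
      have hsum : ∑ s : Fin S, 2 * ℓ ^ 2 * (η * N₀ * K ^ 2 / (2 * Ka ^ 2)) / N₀
          = (S:ℝ) * (ℓ ^ 2 * K ^ 2 / Ka ^ 2 * η) := by
        rw [Finset.sum_const, Finset.card_univ, Fintype.card_fin, nsmul_eq_mul]
        field_simp
      rw [hsum]
      have := mul_le_mul_of_nonneg_left h2 (le_of_lt (by positivity :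
        (0:ℝ) < (S:ℝ) * (ℓ ^ 2 * K ^ 2 / Ka ^ 2)))
      calc (S:ℝ) * (ℓ ^ 2 * K ^ 2 / Ka ^ 2 * η)
          = (S:ℝ) * (ℓ ^ 2 * K ^ 2 / Ka ^ 2) * η := by ring
        _ ≤ (S:ℝ) * (ℓ ^ 2 * K ^ 2 / Ka ^ 2) * (Ka ^ 2 / (ℓ ^ 2 * K ^ 2) * (R / S)) := this
        _ = R := by field_simp
  · intro a ha
    rw [hzero]
    unfold wflmcObj
    apply Finset.sum_nonneg
    intro s _
    have hb : (0:ℝ) < (1 + γ) / 2 := by linarith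
    positivity
end

section
/- Consider the single-sample WFLMC power-allocation program. If the power budget satisfies P ≤ (N₀/(2 min_{k∈𝒦} h_k²)) · min{ R/S , ℓ² K² η / K_a² } (the power-limited regime), then the constant allocation a*_s = min_{k∈𝒦} P h_k²/ℓ² for every s = 1,…,S is feasible for the program and is optimal, i.e. Φ(a*) ≤ Φ(a) for every feasible point a. (Equivalently, the optimal power gain is α^{[s]}_opt = min_{k∈𝒦} √P · h_k / ℓ for all s.) -/
open Finset

/-- Power-limited regime: if `P ≤ (N₀/(2 min_k h_k²)) · min{R/S, ℓ²K²η/K_a²}`, then the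
constant allocation `a*_s = min_k P h_k²/ℓ²` is feasible and optimal. -/
theorem wflmc_power_limited_regime {ι : Type*} (S : ℕ) (hS : 1 ≤ S)
    (η N₀ ℓ P K Ka R γ : ℝ)
    (hη : 0 < η) (hN₀ : 0 < N₀) (hℓ : 0 < ℓ) (hP : 0 < P)
    (hK : 1 ≤ K) (hKa : 1 ≤ Ka) (hKaK : Ka ≤ K)
    (𝒦 : Finset ι) (h𝒦 : 𝒦.Nonempty) (h : ι → ℝ) (hh : ∀ k ∈ 𝒦, 0 < h k)
    (hR : 0 ≤ R) (hγ0 : 0 < γ) (hγ1 : γ < 1)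
    (hreg : P ≤ N₀ / (2 * 𝒦.inf' h𝒦 fun k => (h k) ^ 2) *
      min (R / S) (ℓ ^ 2 * K ^ 2 * η / Ka ^ 2)) :
    wflmcFeasible S η N₀ ℓ P K Ka R 𝒦 h
      (fun _ => 𝒦.inf' h𝒦 fun k => P * (h k) ^ 2 / ℓ ^ 2) ∧
    ∀ a : Fin S → ℝ, wflmcFeasible S η N₀ ℓ P K Ka R 𝒦 h a →
      wflmcObj S η N₀ K Ka γ (fun _ => 𝒦.inf' h𝒦 fun k => P * (h k) ^ 2 / ℓ ^ 2) ≤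
        wflmcObj S η N₀ K Ka γ a := by

  set m := 𝒦.inf' h𝒦 fun k => (h k) ^ 2 with hm
  obtain ⟨k₀, hk₀, hk₀m⟩ := Finset.exists_mem_eq_inf' h𝒦 fun k => (h k) ^ 2
  have hm0 : 0 < m := by rw [hm, hk₀m]; exact pow_pos (hh k₀ hk₀) 2
  set A := 𝒦.inf' h𝒦 fun k => P * (h k) ^ 2 / ℓ ^ 2 with hA
  have hApos : 0 < A := by
    rw [hA, Finset.lt_inf'_iff]
    intro k hk; exact div_pos (mul_pos hP (pow_pos (hh k hk) 2)) (pow_pos hℓ 2)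
  have hA_le : A ≤ P * m / ℓ ^ 2 := by
    rw [hm, hk₀m]; exact Finset.inf'_le _ hk₀
  have hSpos : (0:ℝ) < (S:ℝ) := by exact_mod_cast hS
  have hPm : P * m ≤ N₀ / 2 * min (R / S) (ℓ ^ 2 * K ^ 2 * η / Ka ^ 2) := by
    have h1 := mul_le_mul_of_nonneg_right hreg hm0.le
    calc P * m ≤ N₀ / (2 * m) * min (R / S) (ℓ ^ 2 * K ^ 2 * η / Ka ^ 2) * m := h1
      _ = N₀ / 2 * min (R / S) (ℓ ^ 2 * K ^ 2 * η / Ka ^ 2) := by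
          field_simp
  have hKa0 : (0:ℝ) < Ka := lt_of_lt_of_le one_pos hKa
  have hK0 : (0:ℝ) < K := lt_of_lt_of_le one_pos hK
  have hPm1 : P * m ≤ N₀ / 2 * (R / S) :=
    hPm.trans (mul_le_mul_of_nonneg_left (min_le_left _ _) (by positivity))
  have hPm2 : P * m ≤ N₀ / 2 * (ℓ ^ 2 * K ^ 2 * η / Ka ^ 2) :=
    hPm.trans (mul_le_mul_of_nonneg_left (min_le_right _ _) (by positivity))
  have hcap : A ≤ η * N₀ * K ^ 2 / (2 * Ka ^ 2) := by
    calc A ≤ P * m / ℓ ^ 2 := hA_le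
      _ ≤ (N₀ / 2 * (ℓ ^ 2 * K ^ 2 * η / Ka ^ 2)) / ℓ ^ 2 := by gcongr
      _ = η * N₀ * K ^ 2 / (2 * Ka ^ 2) := by field_simp
  have hfeas : wflmcFeasible S η N₀ ℓ P K Ka R 𝒦 h (fun _ => A) := by
    refine ⟨fun _ => hApos, fun s k hk => Finset.inf'_le _ hk, fun _ => hcap, ?_⟩
    have key : 2 * ℓ ^ 2 * A / N₀ ≤ R / S := by
      calc 2 * ℓ ^ 2 * A / N₀ ≤ 2 * ℓ ^ 2 * (P * m / ℓ ^ 2) / N₀ := by gcongr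
        _ = 2 * (P * m) / N₀ := by field_simp
        _ ≤ 2 * (N₀ / 2 * (R / S)) / N₀ := by gcongr
        _ = R / S := by field_simp
    calc ∑ _s : Fin S, 2 * ℓ ^ 2 * A / N₀ = (S:ℝ) * (2 * ℓ ^ 2 * A / N₀) := by
          rw [Finset.sum_const, Finset.card_univ, Fintype.card_fin, nsmul_eq_mul]
      _ ≤ (S:ℝ) * (R / S) := by gcongr
      _ = R := by field_simp
  refine ⟨hfeas, ?_⟩
  rintro a ⟨ha0, haP, hacap, haDP⟩
  unfold wflmcObj
  apply Finset.sum_le_sum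
  intro s _
  have hw : (0:ℝ) ≤ ((1 + γ) / 2) ^ (-(2 * ((s : ℕ) + 1) : ℤ)) := by positivity
  apply mul_le_mul_of_nonneg_left _ hw
  have hle : a s ≤ A := Finset.le_inf' h𝒦 _ (fun k hk => haP s k hk)
  apply max_le_max le_rfl
  apply sub_le_sub_right
  apply div_le_div_of_nonneg_left (by positivity) (mul_pos (ha0 s) (pow_pos hKa0 2))
  exact mul_le_mul_of_nonneg_right hle (by positivity)
end

section
/- Consider the single-sample WFLMC power-allocation program, and suppose there exists λ > 0 such that the point a* defined by a*_s = min{ ((1+γ)/2)^{−s} · η K √N₀ / (K_a √λ) , min_{k∈𝒦} P h_k²/ℓ² , η N₀ K²/(2 K_a²) } for s = 1,…,S satisfies the differential-privacy constraint with equality, Σ_{s=1}^S a*_s = N₀ R /(2 ℓ²) (the DP-limited regime). Then a* is feasible for the program and is optimal, i.e. Φ(a*) ≤ Φ(a) for every feasible point a. (Equivalently, the optimal power gain is α^{[s]}_opt = min{ ((1+γ)/2)^{−s/2}·√(η K √N₀/(K_a √λ)) , min_{k∈𝒦} √P h_k/ℓ , (K/K_a)√(η N₀/2) }.) -/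
open Finset

/-! The program is separable across rounds, so Lagrangian weak duality with the multiplier `λ`
does the work. On the common box `0 < x ≤ M`, with `M` the smaller of the power cap and the
noise cap, the round-`s` summand is `W_s C / x - 2η W_s` (`W_s = ((1+γ)/2)^(-2s)`,
`C = η² N₀ K² / K_a²`), and `a*_s = min(t_s, M)` minimises the convex function `W_s C / x + λ x`
on the box, because `t_s² λ = W_s C` makes `t_s` its unconstrained minimiser. Summing over the
rounds and using `Σ a_s ≤ N₀ R / (2ℓ²) = Σ a*_s` gives `Φ(a*) ≤ Φ(a)`. -/

theorem mul_sub_le_div_sub_div {c x y : ℝ} (hc : 0 ≤ c) (hx : 0 < x) (hy : 0 < y) :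
    c / y ^ 2 * (y - x) ≤ c / x - c / y := by
  have hgap : c / x - c / y - c / y ^ 2 * (y - x) = c * (y - x) ^ 2 / (x * y ^ 2) := by
    field_simp
  have : 0 ≤ c * (y - x) ^ 2 / (x * y ^ 2) := by positivity
  linarith

theorem isMinOn_div_add_mul_min {c lam t M : ℝ} (hlam : 0 ≤ lam) (ht : 0 < t)
    (htc : t ^ 2 * lam = c) (hM : 0 < M) :
    IsMinOn (fun x => c / x + lam * x) (Set.Ioc 0 M) (min t M) := by
  refine isMinOn_iff.2 fun x ⟨hx, hxM⟩ => ?_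
  have hc : 0 ≤ c := htc ▸ by positivity
  rcases min_cases t M with ⟨hyt, -⟩ | ⟨hyM, hMt⟩
  · have hslope : c / t ^ 2 = lam := by
      rw [← htc]
      field_simp
    have htangent := mul_sub_le_div_sub_div hc hx ht
    rw [hslope] at htangent
    simp only [hyt]
    linarith
  · have hslope : lam ≤ c / M ^ 2 := by
      rw [← htc, le_div_iff₀' (by positivity)]
      exact mul_le_mul_of_nonneg_right (pow_le_pow_left₀ hM.le hMt.le 2) hlam
    have htangent := mul_sub_le_div_sub_div hc hx hM
    have hslope' := mul_le_mul_of_nonneg_right hslope (sub_nonneg.2 hxM)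
    simp only [hyM]
    linarith

theorem sum_le_sum_of_isMinOn_add_mul {ι : Type*} (s : Finset ι) (f : ι → ℝ → ℝ)
    (D : ι → Set ℝ) {lam : ℝ} (hlam : 0 ≤ lam) {x y : ι → ℝ}
    (hy : ∀ i ∈ s, IsMinOn (fun z => f i z + lam * z) (D i) (y i))
    (hx : ∀ i ∈ s, x i ∈ D i) (hxy : ∑ i ∈ s, x i ≤ ∑ i ∈ s, y i) :
    ∑ i ∈ s, f i (y i) ≤ ∑ i ∈ s, f i (x i) := by
  have hlagr := sum_le_sum fun i hi => isMinOn_iff.1 (hy i hi) (x i) (hx i hi)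
  simp only [sum_add_distrib, ← mul_sum] at hlagr
  nlinarith [mul_le_mul_of_nonneg_left hxy hlam]

theorem max_zero_div_sub_eq {η N₀ K Ka x : ℝ} (hη : 0 < η) (hKa : Ka ≠ 0) (hx : 0 < x)
    (hxcap : x ≤ η * N₀ * K ^ 2 / (2 * Ka ^ 2)) :
    max 0 (η ^ 2 * N₀ * K ^ 2 / (x * Ka ^ 2) - 2 * η) =
      η ^ 2 * N₀ * K ^ 2 / Ka ^ 2 / x - 2 * η := by
  rw [div_div, mul_comm x, max_eq_right]
  rw [le_div_iff₀ (by positivity)] at hxcap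
  rw [sub_nonneg, le_div_iff₀ (by positivity)]
  nlinarith

theorem isMinOn_wflmc_summand_add_mul {η N₀ K Ka W lam t M : ℝ} (hη : 0 < η) (hKa : Ka ≠ 0)
    (hlam : 0 ≤ lam) (ht : 0 < t)
    (htlam : t ^ 2 * lam = W * (η ^ 2 * N₀ * K ^ 2 / Ka ^ 2)) (hM : 0 < M)
    (hMcap : M ≤ η * N₀ * K ^ 2 / (2 * Ka ^ 2)) :
    IsMinOn (fun z => W * max 0 (η ^ 2 * N₀ * K ^ 2 / (z * Ka ^ 2) - 2 * η) + lam * z)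
      (Set.Ioc 0 M) (min t M) := by
  have hmin := isMinOn_div_add_mul_min hlam ht htlam hM
  refine isMinOn_iff.2 fun x hx => ?_
  have hy : min t M ∈ Set.Ioc 0 M := ⟨lt_min ht hM, min_le_right t M⟩
  have hterm : ∀ z ∈ Set.Ioc 0 M,
      W * max 0 (η ^ 2 * N₀ * K ^ 2 / (z * Ka ^ 2) - 2 * η) + lam * z =
        (W * (η ^ 2 * N₀ * K ^ 2 / Ka ^ 2) / z + lam * z) - 2 * η * W := fun z hz => by
    rw [max_zero_div_sub_eq hη hKa hz.1 (hz.2.trans hMcap)]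
    ring
  rw [hterm x hx, hterm _ hy]
  linarith [isMinOn_iff.1 hmin x hx]

theorem wflmcFeasible_iff {ι : Type*} {S : ℕ} {η N₀ ℓ P K Ka R : ℝ} {𝒦 : Finset ι}
    (h𝒦 : 𝒦.Nonempty) {h : ι → ℝ} {a : Fin S → ℝ} (hN₀ : 0 < N₀) (hℓ : ℓ ≠ 0) :
    wflmcFeasible S η N₀ ℓ P K Ka R 𝒦 h a ↔
      (∀ s, a s ∈ Set.Ioc 0 (min (𝒦.inf' h𝒦 fun k => P * h k ^ 2 / ℓ ^ 2)
        (η * N₀ * K ^ 2 / (2 * Ka ^ 2)))) ∧ ∑ s, a s ≤ N₀ * R / (2 * ℓ ^ 2) := by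
  have hDP : ∑ s, 2 * ℓ ^ 2 * a s / N₀ ≤ R ↔ ∑ s, a s ≤ N₀ * R / (2 * ℓ ^ 2) := by
    rw [← sum_div, ← mul_sum, div_le_iff₀ hN₀, le_div_iff₀' (by positivity), mul_comm R]
  simp only [wflmcFeasible, hDP, Set.mem_Ioc, le_min_iff, Finset.le_inf'_iff, forall_and]
  tauto

theorem wflmc_dp_limited_regime_general {ι : Type*} (S : ℕ)
    (η N₀ ℓ P K Ka R γ : ℝ)
    (hη : 0 < η) (hN₀ : 0 < N₀) (hℓ : 0 < ℓ) (hP : 0 < P)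
    (hK : 1 ≤ K) (hKa : 1 ≤ Ka)
    (𝒦 : Finset ι) (h𝒦 : 𝒦.Nonempty) (h : ι → ℝ) (hh : ∀ k ∈ 𝒦, 0 < h k)
    (hγ0 : 0 < γ)
    (lam : ℝ) (hlam : 0 < lam) (astar : Fin S → ℝ)
    (hastar : ∀ s : Fin S, astar s =
      min (min (((1 + γ) / 2) ^ (-(((s : ℕ) + 1) : ℤ)) *
            (η * K * Real.sqrt N₀ / (Ka * Real.sqrt lam)))
          (𝒦.inf' h𝒦 fun k => P * (h k) ^ 2 / ℓ ^ 2))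
        (η * N₀ * K ^ 2 / (2 * Ka ^ 2)))
    (hDPeq : ∑ s : Fin S, astar s = N₀ * R / (2 * ℓ ^ 2)) :
    wflmcFeasible S η N₀ ℓ P K Ka R 𝒦 h astar ∧
    ∀ a : Fin S → ℝ, wflmcFeasible S η N₀ ℓ P K Ka R 𝒦 h a →
      wflmcObj S η N₀ K Ka γ astar ≤ wflmcObj S η N₀ K Ka γ a := by
  set M := min (𝒦.inf' h𝒦 fun k => P * (h k) ^ 2 / ℓ ^ 2) (η * N₀ * K ^ 2 / (2 * Ka ^ 2))
  set t : Fin S → ℝ := fun s => ((1 + γ) / 2) ^ (-(((s : ℕ) + 1) : ℤ)) *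
    (η * K * Real.sqrt N₀ / (Ka * Real.sqrt lam))
  have hM : 0 < M := lt_min ((lt_inf'_iff h𝒦).2 fun k hk => by have := hh k hk; positivity)
    (by positivity)
  have ht (s : Fin S) : 0 < t s := by positivity
  have ht_sq (s : Fin S) : t s ^ 2 * lam =
      ((1 + γ) / 2) ^ (-(2 * ((s : ℕ) + 1) : ℤ)) * (η ^ 2 * N₀ * K ^ 2 / Ka ^ 2) := by
    have hexp : (-(2 * ((s : ℕ) + 1) : ℤ)) = -(((s : ℕ) + 1) : ℤ) * (2 : ℕ) := by push_cast; ring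
    rw [hexp, zpow_mul, zpow_natCast]
    simp only [t, mul_pow, div_pow, Real.sq_sqrt hN₀.le, Real.sq_sqrt hlam.le]
    field_simp
  have hastar_eq (s : Fin S) : astar s = min (t s) M := by rw [hastar, min_assoc]
  simp only [wflmcFeasible_iff h𝒦 hN₀ hℓ.ne']
  refine ⟨⟨fun s => hastar_eq s ▸ ⟨lt_min (ht s) hM, min_le_right _ _⟩, hDPeq.le⟩,
    fun a ⟨ha, haDP⟩ => ?_⟩
  exact sum_le_sum_of_isMinOn_add_mul univ
    (fun (s : Fin S) z => ((1 + γ) / 2) ^ (-(2 * ((s : ℕ) + 1) : ℤ)) *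
      max 0 (η ^ 2 * N₀ * K ^ 2 / (z * Ka ^ 2) - 2 * η))
    (fun _ => Set.Ioc 0 M) hlam.le
    (fun s _ => hastar_eq s ▸ isMinOn_wflmc_summand_add_mul hη (by positivity) hlam.le (ht s)
      (ht_sq s) hM (min_le_right _ _))
    (fun s _ => ha s) (hDPeq ▸ haDP)

/-- DP-limited regime: if there is `λ > 0` such that the waterfilling-type allocation
`a*_s = min{((1+γ)/2)^{-s} η K √N₀/(K_a √λ), min_k P h_k²/ℓ², η N₀ K²/(2K_a²)}`
meets the differential-privacy constraint with equality, `Σ_s a*_s = N₀ R/(2ℓ²)`,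
then `a*` is feasible and optimal. -/
theorem wflmc_dp_limited_regime {ι : Type*} (S : ℕ) (hS : 1 ≤ S)
    (η N₀ ℓ P K Ka R γ : ℝ)
    (hη : 0 < η) (hN₀ : 0 < N₀) (hℓ : 0 < ℓ) (hP : 0 < P)
    (hK : 1 ≤ K) (hKa : 1 ≤ Ka) (hKaK : Ka ≤ K)
    (𝒦 : Finset ι) (h𝒦 : 𝒦.Nonempty) (h : ι → ℝ) (hh : ∀ k ∈ 𝒦, 0 < h k)
    (hR : 0 ≤ R) (hγ0 : 0 < γ) (hγ1 : γ < 1)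
    (lam : ℝ) (hlam : 0 < lam) (astar : Fin S → ℝ)
    (hastar : ∀ s : Fin S, astar s =
      min (min (((1 + γ) / 2) ^ (-(((s : ℕ) + 1) : ℤ)) *
            (η * K * Real.sqrt N₀ / (Ka * Real.sqrt lam)))
          (𝒦.inf' h𝒦 fun k => P * (h k) ^ 2 / ℓ ^ 2))
        (η * N₀ * K ^ 2 / (2 * Ka ^ 2)))
    (hDPeq : ∑ s : Fin S, astar s = N₀ * R / (2 * ℓ ^ 2)) :
    wflmcFeasible S η N₀ ℓ P K Ka R 𝒦 h astar ∧
    ∀ a : Fin S → ℝ, wflmcFeasible S η N₀ ℓ P K Ka R 𝒦 h a →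
      wflmcObj S η N₀ K Ka γ astar ≤ wflmcObj S η N₀ K Ka γ a :=
  wflmc_dp_limited_regime_general S η N₀ ℓ P K Ka R γ hη hN₀ hℓ hP hK hKa 𝒦 h𝒦 h hh hγ0 lam hlam
    astar hastar hDPeq
end

section
/- (Zero additive noise is optimal.) Fix reals η > 0, N₀ > 0, K ≥ 1, K_a with 1 ≤ K_a ≤ K, and set the cap A = η N₀ K²/(2 K_a²) (i.e. α ≤ (K/K_a)√(η N₀/2) in the original variable α = √a). For any a > 0, let a' = min{a, A}. Then: (i) the excess-noise variance is unchanged, max{0, N₀ K²/(a' K_a²) − 2/η} = max{0, N₀ K²/(a K_a²) − 2/η} (both sides equal 0 whenever a ≥ A); and (ii) a' ≤ a, so the left-hand side of any constraint that is a nonnegative multiple of a (the per-round differential-privacy loss 2 ℓ² a / N₀ and the transmit-power term a ℓ²/h_k²) does not increase. Consequently, capping every round's allocation at A preserves the objective value of the WFLMC power-allocation problem, preserves feasibility, and corresponds to choosing zero server-added noise β = 0. -/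
/-- Zero additive noise is optimal: capping the squared power gain `a` at
`A = η N₀ K²/(2 K_a²)` (i.e. choosing server-added noise `β = 0`) leaves the
excess-noise variance `max{0, N₀K²/(a K_a²) − 2/η}` unchanged (both sides being `0`
whenever `a ≥ A`), and does not increase `a`, hence does not increase the left-hand
side of any constraint that is a nonnegative multiple of `a`. -/
theorem zero_additive_noise_optimal (η N₀ K Ka a : ℝ)
    (hη : 0 < η) (hN₀ : 0 < N₀) (hK : 1 ≤ K) (hKa : 1 ≤ Ka) (hKaK : Ka ≤ K)
    (ha : 0 < a) :
    (max 0 (N₀ * K ^ 2 / (min a (η * N₀ * K ^ 2 / (2 * Ka ^ 2)) * Ka ^ 2) - 2 / η) =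
      max 0 (N₀ * K ^ 2 / (a * Ka ^ 2) - 2 / η)) ∧
    (η * N₀ * K ^ 2 / (2 * Ka ^ 2) ≤ a →
      max 0 (N₀ * K ^ 2 / (a * Ka ^ 2) - 2 / η) = 0 ∧
      max 0 (N₀ * K ^ 2 / (min a (η * N₀ * K ^ 2 / (2 * Ka ^ 2)) * Ka ^ 2) - 2 / η) = 0) ∧
    min a (η * N₀ * K ^ 2 / (2 * Ka ^ 2)) ≤ a ∧
    (∀ c : ℝ, 0 ≤ c → c * min a (η * N₀ * K ^ 2 / (2 * Ka ^ 2)) ≤ c * a) := by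
  have hKa0 : (0:ℝ) < Ka := lt_of_lt_of_le one_pos hKa
  have hK0 : (0:ℝ) < K := lt_of_lt_of_le one_pos hK
  set A := η * N₀ * K ^ 2 / (2 * Ka ^ 2) with hAdef
  have hA : 0 < A := by rw [hAdef]; positivity
  have key : N₀ * K ^ 2 / (A * Ka ^ 2) = 2 / η := by
    rw [hAdef]; field_simp
  have hzero : ∀ b : ℝ, A ≤ b → max 0 (N₀ * K ^ 2 / (b * Ka ^ 2) - 2 / η) = 0 := by
    intro b hb
    have hb0 : 0 < b := lt_of_lt_of_le hA hb
    have hle : N₀ * K ^ 2 / (b * Ka ^ 2) ≤ N₀ * K ^ 2 / (A * Ka ^ 2) := by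
      gcongr
    rw [key] at hle
    exact max_eq_left (sub_nonpos.mpr hle)
  refine ⟨?_, fun h => ⟨hzero a h, by rw [min_eq_right h]; exact hzero A le_rfl⟩,
    min_le_left _ _, fun c hc => mul_le_mul_of_nonneg_left (min_le_left _ _) hc⟩
  rcases le_total a A with h | h
  · rw [min_eq_left h]
  · rw [min_eq_right h, hzero a h, hzero A le_rfl]
end

section
/- Let E be a real inner product space and let γ be a real with 0 < γ < 1. For all vectors u, d, e ∈ E with ‖u‖ ≤ γ‖d‖, one has ‖u + e‖² ≤ ((1+γ)/2)² · ‖d‖² + ((1+γ)² / ((1−γ)(1+3γ))) · ‖e‖². -/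
/-- Perturbed one-step estimate (Young-type inequality with `τ = ((1+γ)/(2γ))² − 1`):
if `‖u‖ ≤ γ‖d‖` with `0 < γ < 1`, then
`‖u + e‖² ≤ ((1+γ)/2)²‖d‖² + ((1+γ)²/((1−γ)(1+3γ)))‖e‖²`. -/
theorem perturbed_one_step_estimate {E : Type*} [NormedAddCommGroup E]
    [InnerProductSpace ℝ E] (γ : ℝ) (hγ0 : 0 < γ) (hγ1 : γ < 1)
    (u d e : E) (h : ‖u‖ ≤ γ * ‖d‖) :
    ‖u + e‖ ^ 2 ≤ ((1 + γ) / 2) ^ 2 * ‖d‖ ^ 2 +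
      (1 + γ) ^ 2 / ((1 - γ) * (1 + 3 * γ)) * ‖e‖ ^ 2 := by
  have hD : (0:ℝ) < (1 - γ) * (1 + 3 * γ) := by nlinarith
  have h2 : ‖u + e‖ ^ 2 ≤ (‖u‖ + ‖e‖) ^ 2 := by
    nlinarith [norm_add_le u e, norm_nonneg (u + e), norm_nonneg u, norm_nonneg e]
  have key : (‖u‖ + ‖e‖) ^ 2 ≤ ((1 + γ) / 2) ^ 2 * ‖d‖ ^ 2 +
      (1 + γ) ^ 2 / ((1 - γ) * (1 + 3 * γ)) * ‖e‖ ^ 2 := by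
    rw [div_mul_eq_mul_div, ← sub_le_iff_le_add', le_div_iff₀ hD]
    have ha2 : ‖u‖ ^ 2 ≤ γ ^ 2 * ‖d‖ ^ 2 := by
      nlinarith [norm_nonneg u, norm_nonneg d]
    nlinarith [sq_nonneg ((1 - γ) * (1 + 3 * γ) * ‖u‖ - 4 * γ ^ 2 * ‖e‖),
      mul_nonneg (mul_nonneg (sq_nonneg (1 + γ)) hD.le) (sub_nonneg.2 ha2),
      mul_pos hγ0 hγ0, sq_nonneg γ]
  linarith
end

section
/- (Deterministic skeleton of Proposition 1.) Let E be a real inner product space, η > 0, γ ∈ (0,1), and let g : E → E satisfy ‖x − y − η(g(x) − g(y))‖ ≤ γ‖x − y‖ for all x, y ∈ E. Let (x_s)_{s≥0}, (y_s)_{s≥0}, and (e_s)_{s≥1} be sequences in E such that for every s ≥ 1, x_s − y_s = (x_{s−1} − y_{s−1}) − η(g(x_{s−1}) − g(y_{s−1})) + e_s. Then for every s' ≥ 0: ‖x_{s'} − y_{s'}‖² ≤ ((1+γ)/2)^{2s'} · ‖x₀ − y₀‖² + ((1+γ)² / ((1−γ)(1+3γ))) · Σ_{s=1}^{s'} ((1+γ)/2)^{2(s'−s)}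 · ‖e_s‖². -/
/-!
Each round is a `γ`-contraction of the difference plus the error `e_s`, so by the triangle
inequality the new difference has norm at most `γ r + t`. Splitting `(γ r + t)²` by Young's
inequality with the weight that inflates `γ` exactly to the midpoint
`(1 + γ) / 2` of `γ` and `1` gives the one-step bound
`‖x_{s+1} - y_{s+1}‖² ≤ ((1 + γ) / 2)² ‖x_s - y_s‖² + C ‖e_{s+1}‖²`
with `C = (1 + γ)² / ((1 - γ)(1 + 3γ))`; the discrete Grönwall inequality unrolls it.
-/

open Finset

/-- With `D = (1 - γ)(1 + 3γ)`, the gap between the two sides is `(D r - 4 γ t)² / (4 D)`. -/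
theorem sq_mul_add_le {γ : ℝ} (hγ₀ : -(1 / 3) < γ) (hγ₁ : γ < 1) (r t : ℝ) :
    (γ * r + t) ^ 2 ≤
      ((1 + γ) / 2) ^ 2 * r ^ 2 + (1 + γ) ^ 2 / ((1 - γ) * (1 + 3 * γ)) * t ^ 2 := by
  have hD : 0 < (1 - γ) * (1 + 3 * γ) := mul_pos (by linarith) (by linarith)
  have hC : (1 + γ) ^ 2 / ((1 - γ) * (1 + 3 * γ)) * ((1 - γ) * (1 + 3 * γ)) = (1 + γ) ^ 2 :=
    div_mul_cancel₀ _ hD.ne'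
  have hgap : 4 * ((1 - γ) * (1 + 3 * γ)) * (((1 + γ) / 2) ^ 2 * r ^ 2 +
      (1 + γ) ^ 2 / ((1 - γ) * (1 + 3 * γ)) * t ^ 2 - (γ * r + t) ^ 2) =
        ((1 - γ) * (1 + 3 * γ) * r - 4 * γ * t) ^ 2 := by
    linear_combination 4 * t ^ 2 * hC
  have := (mul_nonneg_iff_of_pos_left (by positivity)).mp (hgap ▸ sq_nonneg _)
  linarith

theorem norm_add_sq_le_of_norm_le_mul {E : Type*} [SeminormedAddCommGroup E] {γ r : ℝ}
    (hγ₀ : -(1 / 3) < γ) (hγ₁ : γ < 1) {a : E} (ha : ‖a‖ ≤ γ * r) (b : E) :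
    ‖a + b‖ ^ 2 ≤
      ((1 + γ) / 2) ^ 2 * r ^ 2 + (1 + γ) ^ 2 / ((1 - γ) * (1 + 3 * γ)) * ‖b‖ ^ 2 := by
  have hle : ‖a + b‖ ≤ γ * r + ‖b‖ := (norm_add_le a b).trans (by linarith)
  exact (pow_le_pow_left₀ (norm_nonneg _) hle 2).trans (sq_mul_add_le hγ₀ hγ₁ r ‖b‖)

theorem wflmc_pathwise_recursion_general {E : Type*} [NormedAddCommGroup E]
    [InnerProductSpace ℝ E] (η γ : ℝ) (hγ0 : 0 < γ) (hγ1 : γ < 1)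
    (g : E → E)
    (hg : ∀ x y : E, ‖x - y - η • (g x - g y)‖ ≤ γ * ‖x - y‖)
    (x y e : ℕ → E)
    (hrec : ∀ s : ℕ,
      x (s + 1) - y (s + 1) = (x s - y s) - η • (g (x s) - g (y s)) + e (s + 1)) :
    ∀ s' : ℕ, ‖x s' - y s'‖ ^ 2 ≤
      ((1 + γ) / 2) ^ (2 * s') * ‖x 0 - y 0‖ ^ 2 +
      (1 + γ) ^ 2 / ((1 - γ) * (1 + 3 * γ)) *
        ∑ s ∈ Finset.range s',
          ((1 + γ) / 2) ^ (2 * (s' - (s + 1))) * ‖e (s + 1)‖ ^ 2 := by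
  intro n
  have hstep : ∀ s ≥ 0, ‖x (s + 1) - y (s + 1)‖ ^ 2 ≤
      ((1 + γ) / 2) ^ 2 * ‖x s - y s‖ ^ 2 +
        (1 + γ) ^ 2 / ((1 - γ) * (1 + 3 * γ)) * ‖e (s + 1)‖ ^ 2 := fun s _ ↦ by
    rw [hrec s]
    exact norm_add_sq_le_of_norm_le_mul (by linarith) hγ1 (hg (x s) (y s)) _
  have hunrolled := discrete_gronwall_prod_general (u := fun s ↦ ‖x s - y s‖ ^ 2)
    (c := fun _ ↦ ((1 + γ) / 2) ^ 2) hstep (fun _ _ ↦ sq_nonneg _) (Nat.zero_le n)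
  simp only [prod_const, Nat.card_Ico, ← range_eq_Ico] at hunrolled
  refine hunrolled.trans_eq ?_
  rw [card_range, mul_comm, pow_mul, mul_sum]
  congr 1
  exact sum_congr rfl fun s _ ↦ by rw [pow_mul]; ring

/-- Deterministic skeleton of Proposition 1: if the map `x ↦ x − η g(x)` is a
`γ`-contraction on differences and the coupled iterates satisfy
`x_s − y_s = (x_{s−1} − y_{s−1}) − η(g(x_{s−1}) − g(y_{s−1})) + e_s`, then
`‖x_{s'} − y_{s'}‖² ≤ ((1+γ)/2)^{2s'} ‖x₀ − y₀‖² +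
((1+γ)²/((1−γ)(1+3γ))) Σ_{s=1}^{s'} ((1+γ)/2)^{2(s'−s)} ‖e_s‖²`. -/
theorem wflmc_pathwise_recursion {E : Type*} [NormedAddCommGroup E]
    [InnerProductSpace ℝ E] (η γ : ℝ) (hη : 0 < η) (hγ0 : 0 < γ) (hγ1 : γ < 1)
    (g : E → E)
    (hg : ∀ x y : E, ‖x - y - η • (g x - g y)‖ ≤ γ * ‖x - y‖)
    (x y e : ℕ → E)
    (hrec : ∀ s : ℕ,
      x (s + 1) - y (s + 1) = (x s - y s) - η • (g (x s) - g (y s)) + e (s + 1)) :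
    ∀ s' : ℕ, ‖x s' - y s'‖ ^ 2 ≤
      ((1 + γ) / 2) ^ (2 * s') * ‖x 0 - y 0‖ ^ 2 +
      (1 + γ) ^ 2 / ((1 - γ) * (1 + 3 * γ)) *
        ∑ s ∈ Finset.range s',
          ((1 + γ) / 2) ^ (2 * (s' - (s + 1))) * ‖e (s + 1)‖ ^ 2 :=
  wflmc_pathwise_recursion_general η γ hγ0 hγ1 g hg x y e hrec
end
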